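/- Gain asymptotics: with G(n) := (n−2)² (8/π²) E[(Σ_{l=1}^n (2l−1)² η_l²)^{−1}] for i.i.d. standard Gaussians η_l, one has G(n) ~ 6/(nπ²) as n → ∞, i.e., n·G(n) → 6/π². -/

import Mathlib

/-!
Write `S = ∑ (2l+1)² ηₗ²`. Since `S⁻¹ = ∫₀^∞ e^{-tS} dt`, Tonelli and the Gaussian integral give
`E[S⁻¹] = ∫₀^∞ ∏ₗ (1 + 2t(2l+1)²)^{-1/2} dt`. After the substitution `t = s/n³` every factor is
`1 + O(s/n)`, so by `log (1 + a) = a + O(a²)` the integrand tends to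
`exp (-s ∑ (2l+1)² / n³) → e^{-4s/3}`; the upper half of the factors alone bounds it by
`(1 + (s/8)²)⁻¹` uniformly in `n`. Dominated convergence gives `n³ E[S⁻¹] → 3/4`, hence
`n G(n) → (8/π²)(3/4) = 6/π²`.
-/

open MeasureTheory ProbabilityTheory Real

/-- The gain `G(n) = (n−2)² (8/π²) E[(Σ_{l=1}^n (2l−1)² ηₗ²)⁻¹]` for i.i.d. standard
Gaussians `ηₗ`. -/
noncomputable def steinGain (n : ℕ) : ℝ :=
  ((n : ℝ) - 2) ^ 2 * (8 / π ^ 2) *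
    ∫ x : Fin n → ℝ, (∑ l : Fin n, (2 * (l.val : ℝ) + 1) ^ 2 * (x l) ^ 2)⁻¹
      ∂(Measure.pi fun _ : Fin n => gaussianReal 0 1)

open Filter Topology Set
open scoped NNReal

lemma integral_exp_neg_mul_sq_gaussianReal {v : ℝ≥0} {c : ℝ} (hc : 0 ≤ c) :
    ∫ x, rexp (-(c * x ^ 2)) ∂gaussianReal 0 v = (√(1 + 2 * c * v))⁻¹ := by
  rcases eq_or_ne v 0 with rfl | hv
  · simp [gaussianReal_zero_var]
  rw [integral_gaussianReal_eq_integral_smul hv]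
  have hpdf : ∀ x, gaussianPDFReal 0 v x • rexp (-(c * x ^ 2))
      = (√(2 * π * v))⁻¹ * rexp (-(c + (2 * (v : ℝ))⁻¹) * x ^ 2) := by
    intro x
    rw [gaussianPDFReal, smul_eq_mul, mul_assoc, ← Real.exp_add]
    ring_nf
  simp_rw [hpdf]
  rw [integral_const_mul, integral_gaussian, ← Real.sqrt_inv,
    ← Real.sqrt_mul (by positivity), ← Real.sqrt_inv]
  congr 1
  field_simp
  ring

lemma integral_exp_neg_sum_mul_sq_pi_gaussianReal {ι : Type*} [Fintype ι] {v : ℝ≥0}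
    {w : ι → ℝ} (hw : ∀ i, 0 ≤ w i) :
    ∫ x : ι → ℝ, rexp (-∑ i, w i * x i ^ 2) ∂Measure.pi (fun _ ↦ gaussianReal 0 v)
      = ∏ i, (√(1 + 2 * w i * v))⁻¹ := by
  simp_rw [← Finset.sum_neg_distrib, Real.exp_sum]
  rw [integral_fintype_prod_eq_prod (fun i y ↦ rexp (-(w i * y ^ 2)))]
  exact Finset.prod_congr rfl fun i _ ↦ integral_exp_neg_mul_sq_gaussianReal (hw i)

lemma ae_pos_sum_mul_sq_pi {ι : Type*} [Fintype ι] {μ : ι → Measure ℝ}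
    [∀ i, SigmaFinite (μ i)] {w : ι → ℝ} (hw : ∀ i, 0 ≤ w i) {j : ι} (hj : 0 < w j)
    (hμj : μ j {0} = 0) :
    ∀ᵐ x ∂Measure.pi μ, 0 < ∑ i, w i * x i ^ 2 := by
  have hnull : ∀ᵐ x ∂Measure.pi μ, x j ≠ 0 :=
    measure_mono_null (fun x hx ↦ by simpa using hx)
      (Measure.pi_eval_preimage_null μ hμj)
  filter_upwards [hnull] with x hx
  have hxj : 0 < w j * x j ^ 2 := by positivity
  exact hxj.trans_le <| Finset.single_le_sum (f := fun i ↦ w i * x i ^ 2)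
    (fun i _ ↦ mul_nonneg (hw i) (sq_nonneg _)) (Finset.mem_univ j)

lemma integral_inv_eq_integral_Ioi_integral_exp {α : Type*} [MeasurableSpace α]
    {μ : Measure α} [IsFiniteMeasure μ] {f : α → ℝ} (hf : Measurable f)
    (hpos : ∀ᵐ x ∂μ, 0 < f x) :
    ∫ x, (f x)⁻¹ ∂μ = ∫ t in Ioi 0, ∫ x, rexp (-(t * f x)) ∂μ := by
  have hF : Measurable (Function.uncurry fun (t : ℝ) (x : α) ↦ rexp (-(t * f x))) := by
    fun_prop
  have hinv : ∀ c : ℝ, 0 < c →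
      ENNReal.ofReal c⁻¹ = ∫⁻ t in Ioi 0, ENNReal.ofReal (rexp (-(t * c))) := by
    intro c hc
    have hint : IntegrableOn (fun t ↦ rexp (-(t * c))) (Ioi 0) := by
      simpa [mul_comm] using exp_neg_integrableOn_Ioi 0 hc
    rw [← ofReal_integral_eq_lintegral_ofReal hint (ae_of_all _ fun _ ↦ (exp_pos _).le)]
    have := integral_exp_mul_Ioi (neg_lt_zero.mpr hc) 0
    simp only [mul_zero, exp_zero, neg_div_neg_eq, one_div] at this
    simp_rw [mul_comm _ c, ← neg_mul, this]
  have hlaplace : ∀ t ∈ Ioi (0 : ℝ), ∫⁻ x, ENNReal.ofReal (rexp (-(t * f x))) ∂μ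
      = ENNReal.ofReal (∫ x, rexp (-(t * f x)) ∂μ) := by
    intro t ht
    refine (ofReal_integral_eq_lintegral_ofReal ?_ (ae_of_all _ fun _ ↦ (exp_pos _).le)).symm
    refine Integrable.of_bound (by fun_prop) 1 ?_
    filter_upwards [hpos] with x hx
    rw [Real.norm_of_nonneg (exp_pos _).le, exp_le_one_iff, neg_nonpos]
    exact (mul_pos ht hx).le
  rw [integral_eq_lintegral_of_nonneg_ae (hpos.mono fun x hx ↦ (inv_pos.mpr hx).le)
      (hf.inv.aestronglyMeasurable),
    integral_eq_lintegral_of_nonneg_ae (ae_of_all _ fun t ↦ integral_nonneg fun x ↦ (exp_pos _).le)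
      hF.stronglyMeasurable.integral_prod_right'.aestronglyMeasurable.restrict]
  congr 1
  calc ∫⁻ x, ENNReal.ofReal (f x)⁻¹ ∂μ
      = ∫⁻ x, (∫⁻ t in Ioi 0, ENNReal.ofReal (rexp (-(t * f x)))) ∂μ :=
        lintegral_congr_ae (hpos.mono fun x hx ↦ hinv _ hx)
    _ = ∫⁻ t in Ioi 0, ∫⁻ x, ENNReal.ofReal (rexp (-(t * f x))) ∂μ :=
        lintegral_lintegral_swap (by fun_prop)
    _ = _ := setLIntegral_congr_fun measurableSet_Ioi hlaplace

lemma tendsto_sum_log_one_add {β ι : Type*} {L : Filter β} {s : β → Finset ι}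
    {a : β → ι → ℝ} {ε : β → ℝ} {A : ℝ} (ha : ∀ b, ∀ i ∈ s b, 0 ≤ a b i)
    (hε : ∀ b, ∀ i ∈ s b, a b i ≤ ε b) (hε0 : Tendsto ε L (𝓝 0))
    (hA : Tendsto (fun b ↦ ∑ i ∈ s b, a b i) L (𝓝 A)) :
    Tendsto (fun b ↦ ∑ i ∈ s b, log (1 + a b i)) L (𝓝 A) := by
  have hlower : ∀ b, (∑ i ∈ s b, a b i) * (1 - ε b) ≤ ∑ i ∈ s b, log (1 + a b i) := by
    intro b
    rw [Finset.sum_mul]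
    refine Finset.sum_le_sum fun i hi ↦ ?_
    have h0 := ha b i hi
    have hpos : 0 < 1 + a b i := by linarith
    have hfrac : a b i - a b i ^ 2 ≤ 1 - (1 + a b i)⁻¹ := by
      have hdiv : 1 - (1 + a b i)⁻¹ = a b i / (1 + a b i) := by field_simp; ring
      rw [hdiv, le_div_iff₀ hpos]
      nlinarith
    nlinarith [hε b i hi, one_sub_inv_le_log_of_pos hpos]
  have hupper : ∀ b, ∑ i ∈ s b, log (1 + a b i) ≤ ∑ i ∈ s b, a b i := fun b ↦
    Finset.sum_le_sum fun i hi ↦ by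
      linarith [log_le_sub_one_of_pos (by linarith [ha b i hi] : 0 < 1 + a b i)]
  have hlim : Tendsto (fun b ↦ (∑ i ∈ s b, a b i) * (1 - ε b)) L (𝓝 A) := by
    simpa using hA.mul ((tendsto_const_nhds (x := (1 : ℝ))).sub hε0)
  exact tendsto_of_tendsto_of_tendsto_of_le_of_le hlim hA hlower hupper

/-- `E[exp (-t * ∑ l < n, (2l+1)² ηₗ²)]` for i.i.d. standard Gaussians `ηₗ`. -/
noncomputable def oddSqLaplace (n : ℕ) (t : ℝ) : ℝ :=
  ∏ l ∈ Finset.range n, (√(1 + 2 * (t * (2 * l + 1) ^ 2)))⁻¹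

lemma sum_range_two_mul_add_one_sq (n : ℕ) :
    ∑ l ∈ Finset.range n, (2 * (l : ℝ) + 1) ^ 2 = (n : ℝ) * (4 * (n : ℝ) ^ 2 - 1) / 3 := by
  induction n with
  | zero => simp
  | succ n ih =>
    rw [Finset.sum_range_succ, ih]
    push_cast
    ring

lemma oddSqLaplace_eq_exp_sum_log (n : ℕ) {t : ℝ} (ht : 0 ≤ t) :
    oddSqLaplace n t =
      rexp (-(∑ l ∈ Finset.range n, log (1 + 2 * (t * (2 * l + 1) ^ 2))) / 2) := by
  rw [neg_div, Finset.sum_div, ← Finset.sum_neg_distrib, exp_sum, oddSqLaplace]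
  refine Finset.prod_congr rfl fun l _ ↦ ?_
  rw [sqrt_eq_rpow, ← rpow_neg (by positivity), rpow_def_of_pos (by positivity)]
  ring_nf

lemma tendsto_oddSqLaplace_scaled {s : ℝ} (hs : 0 ≤ s) :
    Tendsto (fun n : ℕ ↦ oddSqLaplace n (((n : ℝ) ^ 3)⁻¹ * s)) atTop
      (𝓝 (rexp (-(4 / 3 * s)))) := by
  have hsum : ∀ n : ℕ, 0 < n → ∑ l ∈ Finset.range n, 2 * ((((n : ℝ) ^ 3)⁻¹ * s) * (2 * l + 1) ^ 2)
      = 2 * s / 3 * (4 - ((n : ℝ) ^ 2)⁻¹) := by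
    intro n hn
    rw [← Finset.mul_sum, ← Finset.mul_sum, sum_range_two_mul_add_one_sq]
    field_simp
  have hlogs : Tendsto (fun n : ℕ ↦ ∑ l ∈ Finset.range n,
      log (1 + 2 * ((((n : ℝ) ^ 3)⁻¹ * s) * (2 * l + 1) ^ 2))) atTop (𝓝 (8 / 3 * s)) := by
    refine tendsto_sum_log_one_add
      (a := fun (n l : ℕ) ↦ 2 * ((((n : ℝ) ^ 3)⁻¹ * s) * (2 * l + 1) ^ 2))
      (ε := fun n ↦ 8 * s * (n : ℝ)⁻¹)
      (fun n l _ ↦ by positivity) (fun n l hl ↦ ?_) ?_ ?_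
    · have hl' : 2 * (l : ℝ) + 1 ≤ 2 * n := by
        have := Finset.mem_range.mp hl
        exact_mod_cast (by omega : 2 * l + 1 ≤ 2 * n)
      calc 2 * ((((n : ℝ) ^ 3)⁻¹ * s) * (2 * l + 1) ^ 2)
          ≤ 2 * ((((n : ℝ) ^ 3)⁻¹ * s) * (2 * n) ^ 2) := by gcongr
        _ = 8 * s * (n : ℝ)⁻¹ := by field_simp; ring
    · simpa using tendsto_inv_atTop_zero.comp tendsto_natCast_atTop_atTop |>.const_mul (8 * s)
    · have hlim : Tendsto (fun n : ℕ ↦ 2 * s / 3 * (4 - ((n : ℝ) ^ 2)⁻¹)) atTop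
          (𝓝 (8 / 3 * s)) := by
        rw [show 8 / 3 * s = 2 * s / 3 * (4 - 0) by ring]
        exact ((tendsto_inv_atTop_zero.comp ((tendsto_pow_atTop two_ne_zero).comp
          tendsto_natCast_atTop_atTop)).const_sub 4).const_mul _
      exact hlim.congr' (eventually_gt_atTop 0 |>.mono fun n hn ↦ (hsum n hn).symm)
  have hexp := (continuous_exp.tendsto _).comp (hlogs.neg.div_const 2)
  rw [show -(8 / 3 * s) / 2 = -(4 / 3 * s) by ring] at hexp
  exact hexp.congr fun n ↦ (oddSqLaplace_eq_exp_sum_log n (by positivity)).symm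

lemma inv_sqrt_one_add_le_one {a : ℝ} (ha : 0 ≤ a) : (√(1 + a))⁻¹ ≤ 1 :=
  inv_le_one_of_one_le₀ (one_le_sqrt.mpr (by linarith))

lemma oddSqLaplace_nonneg (n : ℕ) (t : ℝ) : 0 ≤ oddSqLaplace n t :=
  Finset.prod_nonneg fun _ _ ↦ by positivity

lemma measurable_oddSqLaplace (n : ℕ) : Measurable (oddSqLaplace n) := by
  unfold oddSqLaplace
  fun_prop

lemma one_add_sq_mul_le_pow {x : ℝ} (hx : 0 ≤ x) (m : ℕ) :
    1 + (m * x) ^ 2 ≤ (1 + x) ^ (2 * m) := by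
  have hm : 0 ≤ m * x := by positivity
  calc 1 + (m * x) ^ 2 ≤ (1 + m * x) ^ 2 := by nlinarith
    _ ≤ ((1 + x) ^ m) ^ 2 := by gcongr; exact one_add_mul_le_pow (by linarith) m
    _ = (1 + x) ^ (2 * m) := by rw [← pow_mul, mul_comm]

/-- The factors with `2l + 1 ≥ n`, at least half of them, already make the Laplace transform
decay like `s⁻²` uniformly in `n`. -/
lemma oddSqLaplace_scaled_le {n : ℕ} (hn : 8 ≤ n) {s : ℝ} (hs : 0 ≤ s) :
    oddSqLaplace n (((n : ℝ) ^ 3)⁻¹ * s) ≤ (1 + (s / 8) ^ 2)⁻¹ := by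
  set t := ((n : ℝ) ^ 3)⁻¹ * s
  set x := 2 * s / n
  have hnpos : (0 : ℝ) < n := by positivity
  have hx : 0 ≤ x := by positivity
  have hfactor : ∀ l ∈ Finset.Ico (n / 2) n,
      (√(1 + 2 * (t * (2 * l + 1) ^ 2)))⁻¹ ≤ (√(1 + x))⁻¹ := by
    intro l hl
    have hl' : (n : ℝ) ≤ 2 * l + 1 := by
      have := Finset.mem_Ico.mp hl
      exact_mod_cast (by omega : n ≤ 2 * l + 1)
    have hxt : x ≤ 2 * (t * (2 * l + 1) ^ 2) := by
      calc x = 2 * (t * n ^ 2) := by simp only [x, t]; field_simp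
        _ ≤ 2 * (t * (2 * l + 1) ^ 2) := by gcongr
    gcongr
  have hprod : oddSqLaplace n t ≤ (√(1 + x) ^ (n - n / 2))⁻¹ := by
    rw [oddSqLaplace, ← Finset.prod_range_mul_prod_Ico _ (Nat.div_le_self n 2), ← inv_pow,
      ← Nat.card_Ico (n / 2) n, ← Finset.prod_const]
    calc _ ≤ 1 * ∏ l ∈ Finset.Ico (n / 2) n, (√(1 + 2 * (t * (2 * l + 1) ^ 2)))⁻¹ := by
          gcongr
          exact Finset.prod_le_one (fun _ _ ↦ by positivity)
            fun _ _ ↦ inv_sqrt_one_add_le_one (by positivity)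
      _ ≤ _ := by rw [one_mul]; exact Finset.prod_le_prod (fun _ _ ↦ by positivity) hfactor
  have hpow : 1 + (s / 8) ^ 2 ≤ √(1 + x) ^ (n - n / 2) := by
    set m := (n - n / 2) / 4
    have hmx : s / 8 ≤ m * x := by
      have hm : (n : ℝ) ≤ 16 * m := by exact_mod_cast (by omega : n ≤ 16 * m)
      simp only [x]
      rw [mul_div_assoc', le_div_iff₀ hnpos]
      nlinarith
    calc 1 + (s / 8) ^ 2 ≤ 1 + (m * x) ^ 2 := by gcongr
      _ ≤ (1 + x) ^ (2 * m) := one_add_sq_mul_le_pow hx m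
      _ = √(1 + x) ^ (4 * m) := by
        rw [show 4 * m = 2 * (2 * m) by ring, pow_mul (√(1 + x)), sq_sqrt (by linarith)]
      _ ≤ √(1 + x) ^ (n - n / 2) := pow_le_pow_right₀ (one_le_sqrt.mpr (by linarith)) (by omega)
  exact hprod.trans (inv_anti₀ (by positivity) hpow)

lemma integral_inv_sum_odd_sq_pi_gaussianReal {n : ℕ} (hn : 0 < n) :
    ∫ x : Fin n → ℝ, (∑ l : Fin n, (2 * (l.val : ℝ) + 1) ^ 2 * (x l) ^ 2)⁻¹
      ∂(Measure.pi fun _ : Fin n => gaussianReal 0 1) = ∫ t in Ioi 0, oddSqLaplace n t := by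
  have hnull : gaussianReal 0 1 {0} = 0 :=
    gaussianReal_absolutelyContinuous 0 one_ne_zero (measure_singleton 0)
  rw [integral_inv_eq_integral_Ioi_integral_exp (by fun_prop)
    (ae_pos_sum_mul_sq_pi (fun _ ↦ sq_nonneg _) (j := ⟨0, hn⟩) (by positivity) hnull)]
  refine setIntegral_congr_fun measurableSet_Ioi fun t ht ↦ ?_
  simp_rw [Finset.mul_sum, ← mul_assoc]
  rw [integral_exp_neg_sum_mul_sq_pi_gaussianReal fun l ↦ mul_nonneg (le_of_lt ht) (sq_nonneg _)]
  simp only [NNReal.coe_one, mul_one]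
  exact Fin.prod_univ_eq_prod_range (fun l ↦ (√(1 + 2 * (t * (2 * (l : ℝ) + 1) ^ 2)))⁻¹) n

lemma tendsto_integral_oddSqLaplace_scaled :
    Tendsto (fun n : ℕ ↦ ∫ s in Ioi 0, oddSqLaplace n (((n : ℝ) ^ 3)⁻¹ * s)) atTop
      (𝓝 (3 / 4)) := by
  have hlimit : ∫ s in Ioi 0, rexp (-(4 / 3 * s)) = 3 / 4 := by
    simp_rw [← neg_mul]
    rw [integral_exp_mul_Ioi (by norm_num)]
    norm_num
  rw [← hlimit]
  refine tendsto_integral_filter_of_dominated_convergence (fun s ↦ (1 + (s / 8) ^ 2)⁻¹)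
    (Eventually.of_forall fun n ↦ ((measurable_oddSqLaplace n).comp
      (measurable_const_mul _)).aestronglyMeasurable)
    ((eventually_ge_atTop 8).mono fun n hn ↦ (ae_restrict_mem measurableSet_Ioi).mono
      fun s hs ↦ ?_)
    (integrable_inv_one_add_sq.comp_div (by norm_num)).integrableOn
    ((ae_restrict_mem measurableSet_Ioi).mono fun s hs ↦ tendsto_oddSqLaplace_scaled (le_of_lt hs))
  rw [norm_of_nonneg (oddSqLaplace_nonneg _ _)]
  exact oddSqLaplace_scaled_le hn (le_of_lt hs)

/-- Gain asymptotics: `G(n) ~ 6/(nπ²)` as `n → ∞`, i.e. `n·G(n) → 6/π²`. -/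
theorem stein_gain_asymptotics :
    Filter.Tendsto (fun n : ℕ => (n : ℝ) * steinGain n) Filter.atTop
      (nhds (6 / π ^ 2)) := by
  have hprefactor : Tendsto (fun n : ℕ ↦ (1 - 2 / (n : ℝ)) ^ 2) atTop (𝓝 1) := by
    simpa using ((tendsto_const_nhds (x := (1 : ℝ))).sub
      (tendsto_const_div_atTop_nhds_zero_nat (2 : ℝ))).pow 2
  have hlim := (hprefactor.mul tendsto_integral_oddSqLaplace_scaled).const_mul (8 / π ^ 2)
  rw [show 8 / π ^ 2 * (1 * (3 / 4)) = 6 / π ^ 2 by ring] at hlim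
  refine hlim.congr' ((eventually_gt_atTop 0).mono fun n hn ↦ ?_)
  dsimp only
  rw [steinGain, integral_inv_sum_odd_sq_pi_gaussianReal hn,
    integral_comp_mul_left_Ioi _ _ (by positivity)]
  simp only [mul_zero, inv_inv, smul_eq_mul]
  field_simp
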